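/- The Jacobi theta value θ_{1,1}(q) := ∑_{n∈ℤ} q^{(2n+1)^2/4} satisfies q^{1/4}·∑_{n∈ℤ} q^{n^2+n} = 2 q^{1/4} (q^4;q^4)_∞^2/(q^2;q^2)_∞; i.e., ∑_{n∈ℤ} q^{n^2+n} = 2 (q^4;q^4)_∞^2/(q^2;q^2)_∞. -/

import Mathlib

open PowerSeries Finset

/-- The q-Pochhammer infinite product `(a; q)_∞ = ∏_{k ≥ 0} (1 - a * q^k)`, as a formal
power series, defined coefficientwise via its stabilizing truncated products: when `a`
and `q` have positive order, the `n`-th coefficient of `∏_{k < N} (1 - a * q^k)` does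
not depend on `N` as soon as `N > n`, so this is the limit of the partial products. -/
noncomputable def qPoch {R : Type*} [CommRing R] (a q : PowerSeries R) : PowerSeries R :=
  PowerSeries.mk fun n => PowerSeries.coeff (R := R) n (∏ k ∈ Finset.range (n + 1), (1 - a * q ^ k))

/-- `Ek R k = (q^k; q^k)_∞ = ∏_{m ≥ 1} (1 - q^{k m})`. -/
noncomputable def Ek (R : Type*) [CommRing R] (k : ℕ) : PowerSeries R :=
  qPoch ((PowerSeries.X : PowerSeries R) ^ k) ((PowerSeries.X : PowerSeries R) ^ k)

/-- `E_k = (q^k; q^k)_∞` viewed as a formal Laurent series over `ℚ`. -/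
noncomputable def EL (k : ℕ) : LaurentSeries ℚ := ((Ek ℚ k : PowerSeries ℚ) : LaurentSeries ℚ)

/-- The variable `q` as a formal Laurent series over `ℚ`. -/
noncomputable def qL : LaurentSeries ℚ := ((PowerSeries.X : PowerSeries ℚ) : LaurentSeries ℚ)

/-- A power series viewed as a Laurent series. -/
noncomputable def toL (f : PowerSeries ℚ) : LaurentSeries ℚ := (f : LaurentSeries ℚ)

/-- ∑_{n ∈ ℤ} q^{n²+n}: its m-th coefficient is the number of integers n with n²+n = m. -/
noncomputable def theta11core : PowerSeries ℚ :=
  PowerSeries.mk fun m => ({n : ℤ | n ^ 2 + n = (m : ℤ)}.ncard : ℚ)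

namespace Theta11Aux

noncomputable abbrev qq : PowerSeries ℚ := X ^ 2

noncomputable def gb : ℕ → ℕ → PowerSeries ℚ
  | _, 0 => 1
  | 0, _+1 => 0
  | m+1, k+1 => gb m k + qq ^ (k+1) * gb m (k+1)

@[simp] lemma gb_zero_right (m : ℕ) : gb m 0 = 1 := by cases m <;> rfl
@[simp] lemma gb_zero_succ (k : ℕ) : gb 0 (k+1) = 0 := rfl

lemma gb_succ (m k : ℕ) : gb (m+1) (k+1) = gb m k + qq ^ (k+1) * gb m (k+1) := rfl

lemma gb_eq_zero : ∀ {m k : ℕ}, m < k → gb m k = 0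
  | 0, _+1, _ => rfl
  | m+1, k+1, h => by
      rw [gb_succ, gb_eq_zero (by omega), gb_eq_zero (by omega), mul_zero, add_zero]

@[simp] lemma gb_self : ∀ m : ℕ, gb m m = 1
  | 0 => rfl
  | m+1 => by rw [gb_succ, gb_self m, gb_eq_zero (Nat.lt_succ_self m), mul_zero, add_zero]

/-- second Pascal rule -/
lemma gb_pascal2 : ∀ m k : ℕ, gb (m+1) (k+1) = qq ^ (m - k) * gb m k + gb m (k+1)
  | 0, 0 => by simp [gb_succ]
  | 0, k+1 => by simp [gb_succ, gb_eq_zero (show (1:ℕ) < k+2 by omega)]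
  | m+1, 0 => by
      have A := gb_succ (m+1) 0
      have B := gb_pascal2 m 0
      have D := gb_succ m 0
      have hp : qq^(0+1) * qq^(m-0) = qq^(m+1-0) := by rw [← pow_add]; congr 1; omega
      simp only [gb_zero_right, mul_one] at *
      linear_combination A + qq^(0+1) * B - D + hp
  | m+1, k+1 => by
      rcases lt_or_ge k m with h | h
      · have A := gb_succ (m+1) (k+1)
        have B := gb_pascal2 m k
        have C := gb_pascal2 m (k+1)
        have D := gb_succ m k
        have E := gb_succ m (k+1)
        have hp : qq^(k+1+1) * qq^(m-(k+1)) = qq^(m-k) * qq^(k+1) := by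
          rw [← pow_add, ← pow_add]; congr 1; omega
        have e1 : m + 1 - (k+1) = m - k := by omega
        rw [e1]
        linear_combination A + B + qq^(k+1+1) * C - qq^(m-k) * D - E + gb m (k+1) * hp
      · rcases eq_or_lt_of_le h with h' | h'
        · have hmk : m = k := h'
          subst hmk
          rw [gb_eq_zero (show m+1 < m+1+1 by omega)]
          simp
        · rw [gb_eq_zero (show m+1 < k+1 by omega),
            gb_eq_zero (show m+1+1 < k+1+1 by omega), gb_eq_zero (show m+1 < k+1+1 by omega)]
          simp

/-- symmetry -/
lemma gb_symm : ∀ m k : ℕ, k ≤ m → gb m (m - k) = gb m k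
  | 0, 0, _ => rfl
  | m+1, 0, _ => by simp
  | m+1, k+1, h => by
      rcases eq_or_lt_of_le h with h' | h'
      · rw [h']; simp
      · have hk : k + 1 ≤ m := by omega
        have e1 : m + 1 - (k+1) = (m - (k+1)) + 1 := by omega
        have e3 : m - (k + 1) + 1 = m - k := by omega
        rw [e1, gb_succ m (m - (k+1)), gb_pascal2 m k, e3, gb_symm m (k+1) hk,
          gb_symm m k (by omega)]
        ring

end Theta11Aux

namespace Theta11Aux2
open Theta11Aux

noncomputable def pm (j : ℕ) : PowerSeries ℚ := ∏ i ∈ range j, (1 - qq^(i+1))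

lemma pm_succ (j : ℕ) : pm (j+1) = pm j * (1 - qq^(j+1)) := prod_range_succ _ _

@[simp] lemma pm_zero : pm 0 = 1 := prod_range_zero _

lemma gb_mul_pm : ∀ m k : ℕ, k ≤ m → gb m k * pm k * pm (m - k) = pm m
  | 0, 0, _ => by simp
  | m+1, 0, _ => by simp
  | m+1, k+1, h => by
      have hk : k + 1 ≤ m + 1 := h
      rcases eq_or_lt_of_le hk with h' | h' 
      · have : k + 1 = m + 1 := h'
        rw [this]
        simp
      · have hkm : k + 1 ≤ m := by omega
        have e0 : m + 1 - (k+1) = m - k := by omega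
        have e00 : m - k = (m - (k+1)) + 1 := by omega
        have I1 := gb_mul_pm m k (by omega)
        have I2 := gb_mul_pm m (k+1) hkm
        have hs : pm (k+1) = pm k * (1 - qq^(k+1)) := pm_succ k
        have ht : pm (m-k) = pm (m-(k+1)) * (1 - qq^(m-k)) := by
          rw [e00, pm_succ, ← e00]
        have hu : pm (m+1) = pm m * (1 - qq^(m+1)) := pm_succ m
        have hq : qq^(k+1) * qq^(m-k) = qq^(m+1) := by rw [← pow_add]; congr 1; omega
        rw [e0, gb_succ]
        linear_combination (gb m k * pm (m-k)) * hs + (1 - qq^(k+1)) * I1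
          + qq^(k+1) * gb m (k+1) * pm (k+1) * ht + qq^(k+1) * (1 - qq^(m-k)) * I2 - hu
          - pm m * hq

/-- triangular-type numbers: `tri k = k(k-1)/2`. -/
def tri : ℕ → ℕ
  | 0 => 0
  | k+1 => tri k + k

/-- the Gauss binomial theorem -/
theorem qbin (Y : PowerSeries ℚ) : ∀ m : ℕ,
    ∏ j ∈ range m, (1 + Y * qq^j) = ∑ k ∈ range (m+1), qq^(tri k) * gb m k * Y^k
  | 0 => by simp [tri]
  | m+1 => by
      have hsplit : ∀ (n:ℕ) (g : ℕ → PowerSeries ℚ),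
          ∑ k ∈ range (n+1), g k = g 0 + ∑ k ∈ range n, g (k+1) := by
        intro n g; rw [Finset.sum_range_succ']; ring
      rw [prod_range_succ, qbin Y m]
      rw [hsplit (m+1) (fun k => qq^(tri k) * gb (m+1) k * Y^k),
        hsplit m (fun k => qq^(tri k) * gb m k * Y^k)]
      simp only [show tri 0 = 0 from rfl, pow_zero, gb_zero_right, mul_one, one_mul]
      -- extend range m to range (m+1) on the left inner sum (extra term is zero)
      have hext : ∑ k ∈ range m, qq^(tri (k+1)) * gb m (k+1) * Y^(k+1)
          = ∑ k ∈ range (m+1), qq^(tri (k+1)) * gb m (k+1) * Y^(k+1) := by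
        rw [Finset.sum_range_succ, gb_eq_zero (Nat.lt_succ_self m)]
        ring
      rw [hext]
      have hmain : ∀ k ∈ range (m+1),
          qq^(tri (k+1)) * gb (m+1) (k+1) * Y^(k+1)
          = qq^(tri (k+1)) * gb m (k+1) * Y^(k+1)
            + qq^(tri k + m) * gb m k * Y^(k+1) := by
        intro k hks
        have hk : k ≤ m := by simpa [Nat.lt_succ_iff] using hks
        rw [gb_pascal2 m k]
        have : tri (k+1) + (m - k) = tri k + m := by
          have : tri (k+1) = tri k + k := rfl
          omega
        calc qq^(tri (k+1)) * (qq^(m-k) * gb m k + gb m (k+1)) * Y^(k+1)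
            = qq^(tri (k+1) + (m-k)) * gb m k * Y^(k+1)
              + qq^(tri (k+1)) * gb m (k+1) * Y^(k+1) := by rw [pow_add]; ring
          _ = _ := by rw [this]; ring
      rw [Finset.sum_congr rfl hmain, Finset.sum_add_distrib]
      have : ∀ k ∈ range (m+1),
          qq^(tri k + m) * gb m k * Y^(k+1) = (Y * qq^m) * (qq^(tri k) * gb m k * Y^k) := by
        intro k _
        rw [pow_add, pow_succ]
        ring
      rw [Finset.sum_congr rfl this, ← Finset.mul_sum]
      have hS : ∑ x ∈ range (m+1), qq^(tri x) * gb m x * Y^x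
          = 1 + ∑ x ∈ range (m+1), qq^(tri (x+1)) * gb m (x+1) * Y^(x+1) := by
        rw [hsplit m (fun k => qq^(tri k) * gb m k * Y^k)]
        simp only [show tri 0 = 0 from rfl, pow_zero, gb_zero_right, mul_one, one_mul]
        rw [hext]
      rw [hS]
      ring
end Theta11Aux2

namespace Theta11Aux3
open Theta11Aux Theta11Aux2

theorem vdm : ∀ n m k : ℕ,
    gb (m+n) k = ∑ j ∈ range (k+1), qq^(j * (n + j - k)) * gb m j * gb n (k - j)
  | 0, m, k => by
      rw [Finset.sum_range_succ]
      have h0 : ∀ j ∈ range k, qq^(j * (0 + j - k)) * gb m j * gb 0 (k - j) = 0 := by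
        intro j hj
        have : 0 < k - j := by have := Finset.mem_range.mp hj; omega
        rw [gb_eq_zero this, mul_zero]
      rw [Finset.sum_congr rfl h0]
      simp
  | n+1, m, 0 => by simp
  | n+1, m, k+1 => by
      have LHS : gb (m+(n+1)) (k+1) = gb (m+n) k + qq^(k+1) * gb (m+n) (k+1) := gb_succ _ _
      rw [LHS, vdm n m k, vdm n m (k+1)]
      -- split the j = k+1 terms off both (k+1)-sums
      rw [Finset.sum_range_succ (fun j => qq^(j * (n + j - (k+1))) * gb m j * gb n (k+1-j)) (k+1),
        Finset.sum_range_succ (fun j => qq^(j * (n+1 + j - (k+1))) * gb m j * gb (n+1) (k+1-j)) (k+1)]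
      simp only [Nat.sub_self, gb_zero_right, mul_one]
      have e1 : (k+1) * (n + (k+1) - (k+1)) = (k+1) * n := by congr 1; omega
      have e2 : (k+1) * (n+1 + (k+1) - (k+1)) = (k+1) * (n+1) := by congr 1; omega
      rw [e1, e2]
      have expand : ∀ j ∈ range (k+1),
          qq^(j * (n+1 + j - (k+1))) * gb m j * gb (n+1) (k+1-j)
          = qq^(j * (n + j - k)) * gb m j * gb n (k-j)
            + qq^(k+1) * (qq^(j * (n + j - (k+1))) * gb m j * gb n (k+1-j)) := by
        intro j hj
        have hjk : j ≤ k := by have := Finset.mem_range.mp hj; omega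
        have hsub : k + 1 - j = (k - j) + 1 := by omega
        rw [hsub, gb_succ n (k-j)]
        have eA : j * (n+1 + j - (k+1)) = j * (n + j - k) := by congr 1; omega
        rw [eA]
        by_cases hn : k + 1 - j ≤ n
        · have eB : j * (n + j - k) + (k+1-j) = k+1 + j * (n + j - (k+1)) := by
            have h1 : n + j - k = (n + j - (k+1)) + 1 := by omega
            rw [h1, Nat.mul_add, Nat.mul_one]
            have h2 : j ≤ k + 1 := by omega
            set t := j * (n + j - (k+1))
            omega
          have : (k - j) + 1 = k + 1 - j := by omega
          rw [this]
          calc qq^(j * (n+j-k)) * gb m j * (gb n (k-j) + qq^(k+1-j) * gb n (k+1-j))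
              = qq^(j * (n+j-k)) * gb m j * gb n (k-j)
                + qq^(j * (n+j-k) + (k+1-j)) * gb m j * gb n (k+1-j) := by rw [pow_add]; ring
            _ = _ := by rw [eB, pow_add]; ring
        · have hz : gb n (k+1-j) = 0 := gb_eq_zero (by omega)
          have : (k - j) + 1 = k + 1 - j := by omega
          rw [this, hz]
          ring
      rw [Finset.sum_congr rfl expand, Finset.sum_add_distrib, ← Finset.mul_sum]
      rw [pow_add, pow_succ]
      ring

end Theta11Aux3

namespace Theta11Aux4
open Theta11Aux Theta11Aux2 Theta11Aux3

lemma double_sum_split (n : ℕ) (f : ℕ → ℕ → PowerSeries ℚ) :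
    ∑ k ∈ range (n+1), ∑ l ∈ range (n+1), f k l
    = (∑ i ∈ range (n+1), ∑ l ∈ range (n+1-i), f (l+i) l)
    + (∑ i ∈ range n, ∑ k ∈ range (n-i), f k (k+i+1)) := by
  rw [← Finset.sum_product' (range (n+1)) (range (n+1)) f]
  rw [← Finset.sum_filter_add_sum_filter_not (range (n+1) ×ˢ range (n+1))
    (fun p => p.2 ≤ p.1) (fun p => f p.1 p.2)]
  congr 1
  · rw [Finset.sum_sigma' (range (n+1)) (fun i => range (n+1-i)) (fun i l => f (l+i) l)]
    refine Finset.sum_nbij' (fun p => ⟨p.1 - p.2, p.2⟩)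
      (fun a => (a.2 + a.1, a.2)) ?_ ?_ ?_ ?_ ?_
    · rintro ⟨k, l⟩ hp
      simp only [Finset.mem_filter, Finset.mem_product, Finset.mem_range] at hp
      simp only [Finset.mem_sigma, Finset.mem_range]
      omega
    · rintro ⟨i, l⟩ ha
      simp only [Finset.mem_sigma, Finset.mem_range] at ha
      simp only [Finset.mem_filter, Finset.mem_product, Finset.mem_range]
      omega
    · rintro ⟨k, l⟩ hp
      simp only [Finset.mem_filter, Finset.mem_product, Finset.mem_range] at hp
      dsimp only
      have h : l + (k - l) = k := by omega
      simp [h]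
    · rintro ⟨i, l⟩ ha
      dsimp only
      simp [Nat.add_sub_cancel_left]
    · rintro ⟨k, l⟩ hp
      simp only [Finset.mem_filter, Finset.mem_product, Finset.mem_range] at hp
      have : l + (k - l) = k := by omega
      simp only [this]
  · rw [Finset.sum_sigma' (range n) (fun i => range (n-i)) (fun i k => f k (k+i+1))]
    refine Finset.sum_nbij' (fun p => ⟨p.2 - p.1 - 1, p.1⟩)
      (fun a => (a.2, a.2 + a.1 + 1)) ?_ ?_ ?_ ?_ ?_
    · rintro ⟨k, l⟩ hp
      simp only [Finset.mem_filter, Finset.mem_product, Finset.mem_range, not_le] at hp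
      simp only [Finset.mem_sigma, Finset.mem_range]
      omega
    · rintro ⟨i, k⟩ ha
      simp only [Finset.mem_sigma, Finset.mem_range] at ha
      simp only [Finset.mem_filter, Finset.mem_product, Finset.mem_range, not_le]
      omega
    · rintro ⟨k, l⟩ hp
      simp only [Finset.mem_filter, Finset.mem_product, Finset.mem_range, not_le] at hp
      dsimp only
      have h : k + (l - k - 1) + 1 = l := by omega
      simp [h]
    · rintro ⟨i, k⟩ ha
      dsimp only
      have h : k + i + 1 - k - 1 = i := by omega
      simp [h]
    · rintro ⟨k, l⟩ hp
      simp only [Finset.mem_filter, Finset.mem_product, Finset.mem_range, not_le] at hp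
      have : k + (l - k - 1) + 1 = l := by omega
      simp only [this]

end Theta11Aux4

namespace Theta11Aux5
open Theta11Aux Theta11Aux2 Theta11Aux3 Theta11Aux4

lemma cong_trans {d : ℕ} {a b c : PowerSeries ℚ} (h1 : X^d ∣ a - b) (h2 : X^d ∣ b - c) :
    X^d ∣ a - c := by
  have := dvd_add h1 h2
  rwa [sub_add_sub_cancel] at this

lemma cong_symm {d : ℕ} {a b : PowerSeries ℚ} (h : X^d ∣ a - b) : X^d ∣ b - a := by
  have := h.neg_right
  rwa [neg_sub] at this

lemma cong_mul {d : ℕ} {a a' b b' : PowerSeries ℚ} (h1 : X^d ∣ a - a') (h2 : X^d ∣ b - b') :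
    X^d ∣ a * b - a' * b' := by
  have : a * b - a' * b' = (a - a') * b + a' * (b - b') := by ring
  rw [this]
  exact dvd_add (h1.mul_right b) (h2.mul_left a')

lemma cong_prod_one {d : ℕ} {s : Finset ℕ} {f : ℕ → PowerSeries ℚ}
    (h : ∀ i ∈ s, X^d ∣ f i - 1) : X^d ∣ (∏ i ∈ s, f i) - 1 := by
  classical
  induction s using Finset.cons_induction with
  | empty => simp
  | cons a s ha ih =>
      rw [Finset.prod_cons]
      have h1 : X^d ∣ f a - 1 := h a (Finset.mem_cons_self a s)
      have h2 : X^d ∣ (∏ i ∈ s, f i) - 1 := ih (fun i hi => h i (Finset.mem_cons_of_mem hi))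
      have : f a * ∏ i ∈ s, f i - 1
          = (f a - 1) * ∏ i ∈ s, f i + ((∏ i ∈ s, f i) - 1) := by ring
      rw [this]
      exact dvd_add (h1.mul_right _) h2

noncomputable def pmc (c j : ℕ) : PowerSeries ℚ := ∏ i ∈ range j, (1 - (X : PowerSeries ℚ)^(c*(i+1)))

lemma pmc_cong (c : ℕ) (hc : 1 ≤ c) {a b d : ℕ} (hab : a ≤ b) (hd : d ≤ c*(a+1)) :
    X^d ∣ pmc c b - pmc c a := by
  obtain ⟨e, rfl⟩ := Nat.exists_eq_add_of_le hab
  unfold pmc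
  rw [Finset.prod_range_add]
  have key : X^d ∣ (∏ i ∈ range e, (1 - (X : PowerSeries ℚ)^(c*(a+i+1)))) - 1 := by
    apply cong_prod_one
    intro i _
    have h1 : d ≤ c*(a+i+1) := by
      have : c * (a+1) ≤ c * (a+i+1) := Nat.mul_le_mul_left c (by omega)
      omega
    have : (1 : PowerSeries ℚ) - X^(c*(a+i+1)) - 1 = -X^(c*(a+i+1)) := by ring
    rw [this]
    exact (pow_dvd_pow X h1).neg_right
  have : (∏ i ∈ range a, (1 - (X:PowerSeries ℚ)^(c*(i+1))))
        * (∏ i ∈ range e, (1 - (X:PowerSeries ℚ)^(c*(a+i+1))))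
        - ∏ i ∈ range a, (1 - (X:PowerSeries ℚ)^(c*(i+1)))
      = (∏ i ∈ range a, (1 - (X:PowerSeries ℚ)^(c*(i+1))))
        * ((∏ i ∈ range e, (1 - (X:PowerSeries ℚ)^(c*(a+i+1)))) - 1) := by ring
  rw [this]
  exact Dvd.dvd.mul_left key _

noncomputable def pp (j : ℕ) : PowerSeries ℚ := ∏ i ∈ range j, (1 + qq^(i+1))

lemma pm_eq (j : ℕ) : pm j = pmc 2 j := by
  unfold pm pmc
  refine Finset.prod_congr rfl fun i _ => ?_
  rw [← pow_mul]

lemma pp_cong {a b d : ℕ} (hab : a ≤ b) (hd : d ≤ 2*(a+1)) :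
    X^d ∣ pp b - pp a := by
  obtain ⟨e, rfl⟩ := Nat.exists_eq_add_of_le hab
  unfold pp
  rw [Finset.prod_range_add]
  have key : X^d ∣ (∏ i ∈ range e, (1 + qq^(a+i+1))) - 1 := by
    apply cong_prod_one
    intro i _
    have h1 : d ≤ 2*(a+i+1) := by omega
    have : (1 : PowerSeries ℚ) + qq^(a+i+1) - 1 = X^(2*(a+i+1)) := by
      rw [← pow_mul]; ring_nf
    rw [this]
    exact pow_dvd_pow X h1
  have expand : (∏ i ∈ range a, ((1:PowerSeries ℚ) + qq^(i+1)))
        * (∏ i ∈ range e, ((1:PowerSeries ℚ) + qq^(a+i+1)))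
        - ∏ i ∈ range a, ((1:PowerSeries ℚ) + qq^(i+1))
      = (∏ i ∈ range a, ((1:PowerSeries ℚ) + qq^(i+1)))
        * ((∏ i ∈ range e, ((1:PowerSeries ℚ) + qq^(a+i+1))) - 1) := by ring
  rw [expand]
  exact Dvd.dvd.mul_left key _

lemma pm_cong {a b d : ℕ} (hab : a ≤ b) (hd : d ≤ 2*(a+1)) :
    X^d ∣ pm b - pm a := by
  rw [pm_eq, pm_eq]
  exact pmc_cong 2 (by omega) hab hd

lemma pm4_eq (j : ℕ) : pmc 4 j = pm j * pp j := by
  unfold pmc pm pp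
  rw [← Finset.prod_mul_distrib]
  refine Finset.prod_congr rfl fun i _ => ?_
  have e : 4*(i+1) = (2*(i+1))*2 := by ring
  rw [e, pow_mul, pow_mul X 2 (i+1)]
  ring

end Theta11Aux5

namespace Theta11Aux6
open Theta11Aux Theta11Aux2 Theta11Aux3 Theta11Aux4 Theta11Aux5

lemma two_tri : ∀ k : ℕ, 2 * tri k + k = k * k
  | 0 => rfl
  | k+1 => by
      have ih := two_tri k
      show 2 * (tri k + k) + (k+1) = (k+1) * (k+1)
      calc 2 * (tri k + k) + (k+1) = (2 * tri k + k) + (2*k+1) := by ring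
        _ = k*k + (2*k+1) := by rw [ih]
        _ = (k+1)*(k+1) := by ring

lemma exp1 (i l : ℕ) :
    ((l+i)*(l+i) + (l+i)) + 2 * tri l = (i*i + i) + 2*(l*(l+i)) := by
  have H : (((l+i)*(l+i) + (l+i)) + 2 * tri l) + l = ((i*i + i) + 2*(l*(l+i))) + l := by
    calc (((l+i)*(l+i) + (l+i)) + 2 * tri l) + l
        = ((l+i)*(l+i) + (l+i)) + (2 * tri l + l) := by ring
      _ = ((l+i)*(l+i) + (l+i)) + l*l := by rw [two_tri l]
      _ = ((i*i + i) + 2*(l*(l+i))) + l := by ring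
  exact Nat.add_right_cancel H

lemma exp2 (i k : ℕ) :
    (k*k + k) + 2 * tri (k+i+1) = (i*i + i) + 2*(k*(k+(i+1))) := by
  have H : ((k*k + k) + 2 * tri (k+i+1)) + (k+i+1)
      = ((i*i + i) + 2*(k*(k+(i+1)))) + (k+i+1) := by
    calc ((k*k + k) + 2 * tri (k+i+1)) + (k+i+1)
        = (k*k + k) + (2 * tri (k+i+1) + (k+i+1)) := by ring
      _ = (k*k + k) + (k+i+1)*(k+i+1) := by rw [two_tri (k+i+1)]
      _ = ((i*i + i) + 2*(k*(k+(i+1)))) + (k+i+1) := by ring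
  exact Nat.add_right_cancel H

lemma lemA (n : ℕ) :
    ∏ j ∈ range n, (1 + qq * qq^j) = ∑ k ∈ range (n+1), (X:PowerSeries ℚ)^(k*k+k) * gb n k := by
  rw [qbin qq n]
  refine Finset.sum_congr rfl fun k _ => ?_
  have e : 2*(tri k + k) = k*k + k := by
    calc 2*(tri k + k) = 2*tri k + k + k := by ring
      _ = k*k + k := by rw [two_tri]
  calc qq^(tri k) * gb n k * qq^k = (X:PowerSeries ℚ)^(2*(tri k + k)) * gb n k := by
        rw [← pow_mul, ← pow_mul, mul_right_comm, ← pow_add,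
          show 2*tri k + 2*k = 2*(tri k + k) from by ring]
    _ = _ := by rw [e]

lemma lemB (n : ℕ) :
    ∏ j ∈ range n, (1 + 1 * qq^j) = ∑ k ∈ range (n+1), (X:PowerSeries ℚ)^(2 * tri k) * gb n k := by
  rw [qbin 1 n]
  refine Finset.sum_congr rfl fun k _ => ?_
  rw [one_pow, mul_one, ← pow_mul]

lemma lemB2 (n : ℕ) :
    ∏ j ∈ range (n+1), (1 + 1 * qq^j) = 2 * pp n := by
  rw [Finset.prod_range_succ' (fun j => 1 + 1 * qq^j) n]
  have h0 : (1:PowerSeries ℚ) + 1 * qq^0 = 2 := by norm_num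
  rw [h0]
  unfold pp
  rw [Finset.prod_congr rfl (fun i (_ : i ∈ range n) => by rw [one_mul] :
    ∀ i ∈ range n, (1:PowerSeries ℚ) + 1 * qq^(i+1) = 1 + qq^(i+1))]
  ring

lemma lemA2 (n : ℕ) : ∏ j ∈ range n, (1 + qq * qq^j) = pp n := by
  unfold pp
  refine Finset.prod_congr rfl fun i _ => ?_
  rw [pow_succ']

lemma vdm_appl (n t : ℕ) (h : t ≤ n) :
    gb (2*n) (n+t) = ∑ l ∈ range (n+1-t), qq^(l*(l+t)) * gb n (l+t) * gb n l := by
  have h0 : 2*n = n + n := by ring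
  rw [h0, vdm n n (n+t)]
  rw [show n+t+1 = t + (n+1) from by omega, Finset.sum_range_add]
  have z1 : ∀ j ∈ range t, qq^(j * (n + j - (n+t))) * gb n j * gb n (n+t-j) = 0 := by
    intro j hj
    have : n < n + t - j := by have := Finset.mem_range.mp hj; omega
    rw [gb_eq_zero this, mul_zero]
  rw [Finset.sum_congr rfl z1, Finset.sum_const_zero, zero_add]
  have step1 : ∀ l ∈ range (n+1),
      qq^((t+l) * (n + (t+l) - (n+t))) * gb n (t+l) * gb n (n+t-(t+l))
      = qq^(l*(l+t)) * gb n (l+t) * gb n l := by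
    intro l hl
    have hln : l ≤ n := by have := Finset.mem_range.mp hl; omega
    by_cases hc : l + t ≤ n
    · have e1 : (t+l) * (n + (t+l) - (n+t)) = l*(l+t) := by
        have : n + (t+l) - (n+t) = l := by omega
        rw [this]; ring
      have e2 : n + t - (t+l) = n - l := by omega
      have e3 : t + l = l + t := by omega
      rw [e1, e2, e3, gb_symm n l (by omega)]
    · have z3 : gb n (t+l) = 0 := gb_eq_zero (by omega)
      have z4 : gb n (l+t) = 0 := gb_eq_zero (by omega)
      rw [z3, z4]
      simp
  rw [Finset.sum_congr rfl step1]
  refine (Finset.sum_subset (Finset.range_subset_range.mpr (by omega : n+1-t ≤ n+1)) ?_).symm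
  intro l _ hl
  have : n < l + t := by
    have := Finset.mem_range.not.mp hl
    omega
  rw [gb_eq_zero this, mul_zero, zero_mul]

end Theta11Aux6

namespace Theta11Aux7
open Theta11Aux Theta11Aux2 Theta11Aux3 Theta11Aux4 Theta11Aux5 Theta11Aux6

lemma cong_sum {d : ℕ} {s : Finset ℕ} {f g : ℕ → PowerSeries ℚ}
    (h : ∀ i ∈ s, X^d ∣ f i - g i) :
    X^d ∣ (∑ i ∈ s, f i) - ∑ i ∈ s, g i := by
  rw [← Finset.sum_sub_distrib]
  exact Finset.dvd_sum h

lemma gb_pm_sq (d n N t : ℕ) (ht : t ≤ n) (hd : d ≤ 2*(n-t+1)) (hN : 2*n ≤ N) :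
    X^d ∣ gb (2*n) (n+t) * (pm N * pm N) - pm N := by
  have closed : gb (2*n) (n+t) * pm (n+t) * pm (n-t) = pm (2*n) := by
    have h2 := gb_mul_pm (2*n) (n+t) (by omega)
    rwa [show 2*n - (n+t) = n - t from by omega] at h2
  have c1 : X^d ∣ pm N - pm (n+t) := pm_cong (by omega) (by omega)
  have c2 : X^d ∣ pm N - pm (n-t) := pm_cong (by omega) (by omega)
  have c3 : X^d ∣ pm N - pm (2*n) := pm_cong (by omega) (by omega)
  have step1 : X^d ∣ gb (2*n) (n+t) * (pm N * pm N) - gb (2*n) (n+t) * (pm (n+t) * pm (n-t)) :=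
    cong_mul (by simp) (cong_mul c1 c2)
  have e : gb (2*n) (n+t) * (pm (n+t) * pm (n-t)) = pm (2*n) := by rw [← closed]; ring
  rw [e] at step1
  exact cong_trans step1 (cong_symm c3)

lemma per_term (d n N t i : ℕ) (hn : 2*d ≤ n) (hN : 2*n ≤ N) (ht : t ≤ i + 1) (htn : t ≤ n) :
    X^d ∣ X^(i*i+i) * (gb (2*n) (n+t) * (pm N * pm N)) - X^(i*i+i) * pm N := by
  by_cases hc : d ≤ i*i+i
  · exact dvd_sub ((pow_dvd_pow X hc).mul_right _) ((pow_dvd_pow X hc).mul_right _)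
  · have hi : i < d := by
      by_contra hik
      push_neg at hik
      have h2 : i ≤ i*i + i := Nat.le_add_left i (i*i)
      omega
    have hd2 : d ≤ 2*(n - t + 1) := by omega
    have key := gb_pm_sq d n N t htn hd2 hN
    have e : X^(i*i+i) * (gb (2*n) (n+t) * (pm N * pm N)) - X^(i*i+i) * pm N
        = X^(i*i+i) * (gb (2*n) (n+t) * (pm N * pm N) - pm N) := by ring
    rw [e]
    exact key.mul_left _

noncomputable def theta2 (n : ℕ) : PowerSeries ℚ := ∑ i ∈ range n, (X:PowerSeries ℚ)^(i*i+i)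

lemma S2 (n : ℕ) :
    (∏ j ∈ range n, (1 + qq * qq^j)) * (∏ j ∈ range n, (1 + 1 * qq^j))
    = (∑ i ∈ range (n+1), (X:PowerSeries ℚ)^(i*i+i) * gb (2*n) (n+i))
      + ∑ i ∈ range n, (X:PowerSeries ℚ)^(i*i+i) * gb (2*n) (n+(i+1)) := by
  rw [lemA n, lemB n, Finset.sum_mul_sum,
    double_sum_split n (fun k l => ((X:PowerSeries ℚ)^(k*k+k) * gb n k)
      * ((X:PowerSeries ℚ)^(2*tri l) * gb n l))]
  congr 1
  · refine Finset.sum_congr rfl fun i hi => ?_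
    have hin : i ≤ n := by have := Finset.mem_range.mp hi; omega
    rw [vdm_appl n i hin, Finset.mul_sum]
    refine Finset.sum_congr rfl fun l _ => ?_
    calc ((X:PowerSeries ℚ)^((l+i)*(l+i)+(l+i)) * gb n (l+i)) * ((X:PowerSeries ℚ)^(2*tri l) * gb n l)
        = (X:PowerSeries ℚ)^(((l+i)*(l+i)+(l+i)) + 2*tri l) * (gb n (l+i) * gb n l) := by
          rw [pow_add]; ring
      _ = (X:PowerSeries ℚ)^((i*i+i) + 2*(l*(l+i))) * (gb n (l+i) * gb n l) := by rw [exp1]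
      _ = (X:PowerSeries ℚ)^(i*i+i) * (qq^(l*(l+i)) * gb n (l+i) * gb n l) := by
          rw [pow_add, ← pow_mul]
          ring
  · refine Finset.sum_congr rfl fun i hi => ?_
    have hin : i + 1 ≤ n := by have := Finset.mem_range.mp hi; omega
    rw [vdm_appl n (i+1) hin, show n+1-(i+1) = n-i from by omega, Finset.mul_sum]
    refine Finset.sum_congr rfl fun k _ => ?_
    calc ((X:PowerSeries ℚ)^(k*k+k) * gb n k) * ((X:PowerSeries ℚ)^(2*tri (k+i+1)) * gb n (k+i+1))
        = (X:PowerSeries ℚ)^((k*k+k) + 2*tri (k+i+1)) * (gb n (k+i+1) * gb n k) := by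
          rw [pow_add]; ring
      _ = (X:PowerSeries ℚ)^((i*i+i) + 2*(k*(k+(i+1)))) * (gb n (k+i+1) * gb n k) := by rw [exp2]
      _ = (X:PowerSeries ℚ)^(i*i+i) * (qq^(k*(k+(i+1))) * gb n (k+(i+1)) * gb n k) := by
          rw [pow_add, ← pow_mul, show k+(i+1) = k+i+1 from by omega]
          ring

lemma lemB2' (n : ℕ) (hn : 1 ≤ n) :
    ∏ j ∈ range n, (1 + 1 * qq^j) = 2 * pp (n-1) := by
  obtain ⟨n', rfl⟩ : ∃ n', n = n' + 1 := ⟨n - 1, by omega⟩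
  rw [lemB2 n']
  simp

lemma key_cong (d n N : ℕ) (hn : n = 2*d + 1) (hN : N = 2*n) :
    X^d ∣ (2 * theta2 n) * pm N - 2 * (pmc 4 N)^2 := by
  have hn1 : 1 ≤ n := by omega
  -- E1 = E2
  have e12 : 2 * (pmc 4 N)^2 = (pm N * pm N) * (2 * pp N * pp N) := by
    rw [pm4_eq]; ring
  -- E2 ≡ E3
  have c_pp1 : X^d ∣ pp N - pp n := pp_cong (by omega) (by omega)
  have c_pp2 : X^d ∣ (2:PowerSeries ℚ) * pp N - 2 * pp (n-1) := by
    have h2 := (pp_cong (show n-1 ≤ N from by omega) (show d ≤ 2*(n-1+1) from by omega)).mul_left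
      (2:PowerSeries ℚ)
    rwa [mul_sub] at h2
  have e23 : X^d ∣ (pm N * pm N) * (2 * pp N * pp N)
      - (pm N * pm N) * ((∏ j ∈ range n, (1 + qq * qq^j)) * (∏ j ∈ range n, (1 + 1 * qq^j))) := by
    apply cong_mul (by simp)
    rw [lemA2 n, lemB2' n hn1]
    have expand : (2:PowerSeries ℚ) * pp N * pp N = (2 * pp N) * pp N := by ring
    have expand2 : pp n * (2 * pp (n-1)) = (2 * pp (n-1)) * pp n := by ring
    rw [expand, expand2]
    exact cong_mul c_pp2 c_pp1
  -- E3 = E4 via S2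
  have e34 : (pm N * pm N) * ((∏ j ∈ range n, (1 + qq * qq^j)) * (∏ j ∈ range n, (1 + 1 * qq^j)))
      = (∑ i ∈ range (n+1), (X:PowerSeries ℚ)^(i*i+i) * (gb (2*n) (n+i) * (pm N * pm N)))
        + ∑ i ∈ range n, (X:PowerSeries ℚ)^(i*i+i) * (gb (2*n) (n+(i+1)) * (pm N * pm N)) := by
    rw [S2 n, mul_add, Finset.mul_sum, Finset.mul_sum]
    congr 1 <;> exact Finset.sum_congr rfl fun i _ => by ring
  -- E4 ≡ E5
  have e45 : X^d ∣ ((∑ i ∈ range (n+1), (X:PowerSeries ℚ)^(i*i+i) * (gb (2*n) (n+i) * (pm N * pm N)))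
        + ∑ i ∈ range n, (X:PowerSeries ℚ)^(i*i+i) * (gb (2*n) (n+(i+1)) * (pm N * pm N)))
      - ((∑ i ∈ range (n+1), (X:PowerSeries ℚ)^(i*i+i) * pm N)
        + ∑ i ∈ range n, (X:PowerSeries ℚ)^(i*i+i) * pm N) := by
    have hsub : ∀ (a b a' b' : PowerSeries ℚ), (a + b) - (a' + b') = (a - a') + (b - b') := by
      intros; ring
    rw [hsub]
    refine dvd_add (cong_sum fun i hi => ?_) (cong_sum fun i hi => ?_)
    · exact per_term d n N i i (by omega) (by omega) (by omega)
        (by have := Finset.mem_range.mp hi; omega)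
    · exact per_term d n N (i+1) i (by omega) (by omega) (by omega)
        (by have := Finset.mem_range.mp hi; omega)
  -- E5 = E6
  have e56 : ((∑ i ∈ range (n+1), (X:PowerSeries ℚ)^(i*i+i) * pm N)
        + ∑ i ∈ range n, (X:PowerSeries ℚ)^(i*i+i) * pm N)
      = (2 * theta2 n) * pm N + (X:PowerSeries ℚ)^(n*n+n) * pm N := by
    rw [Finset.sum_range_succ]
    unfold theta2
    rw [two_mul, add_mul, Finset.sum_mul]
    ring
  -- E6 ≡ E7
  have e67 : X^d ∣ ((2 * theta2 n) * pm N + (X:PowerSeries ℚ)^(n*n+n) * pm N)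
      - (2 * theta2 n) * pm N := by
    have : ((2 * theta2 n) * pm N + (X:PowerSeries ℚ)^(n*n+n) * pm N)
        - (2 * theta2 n) * pm N = (X:PowerSeries ℚ)^(n*n+n) * pm N := by ring
    rw [this]
    have hd : d ≤ n*n+n := by
      have : n ≤ n*n + n := Nat.le_add_left n (n*n)
      omega
    exact (pow_dvd_pow X hd).mul_right _
  -- assemble
  have big : X^d ∣ 2 * (pmc 4 N)^2 - (2 * theta2 n) * pm N := by
    rw [e12]
    refine cong_trans e23 ?_
    rw [e34]
    refine cong_trans e45 ?_
    rw [e56]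
    exact e67
  exact cong_symm big

end Theta11Aux7

namespace Theta11Aux8
open Theta11Aux Theta11Aux2 Theta11Aux3 Theta11Aux4 Theta11Aux5 Theta11Aux6 Theta11Aux7

lemma coeff_eq {d : ℕ} {A B : PowerSeries ℚ} (h : X^d ∣ A - B) {m : ℕ} (hm : m < d) :
    coeff (R := ℚ) m A = coeff (R := ℚ) m B := by
  have h0 := PowerSeries.X_pow_dvd_iff.mp h m hm
  rw [map_sub, sub_eq_zero] at h0
  exact h0

lemma nat_sol_unique {a b : ℕ} (h : a*a + a = b*b + b) : a = b := by
  rcases lt_trichotomy a b with hl | he | hg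
  · exfalso; nlinarith
  · exact he
  · exfalso; nlinarith

lemma Ek_cong (c d N : ℕ) (hc : 1 ≤ c) (hdN : d ≤ N) : X^d ∣ Ek ℚ c - pmc c N := by
  rw [PowerSeries.X_pow_dvd_iff]
  intro m hm
  rw [map_sub, sub_eq_zero]
  have h1 : coeff (R := ℚ) m (Ek ℚ c) = coeff (R := ℚ) m (pmc c (m+1)) := by
    show coeff (R := ℚ) m (qPoch (X^c) (X^c)) = _
    rw [qPoch, coeff_mk]
    congr 1
    refine Finset.prod_congr rfl fun k _ => ?_
    congr 1
    rw [← pow_succ', ← pow_mul]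
  rw [h1]
  exact (coeff_eq (pmc_cong c hc (show m+1 ≤ N from by omega)
    (show m+1 ≤ c*(m+1+1) from by nlinarith)) (Nat.lt_succ_self m)).symm

lemma theta_cong (d n : ℕ) (hdn : d ≤ n) : X^d ∣ theta11core - 2 * theta2 n := by
  rw [PowerSeries.X_pow_dvd_iff]
  intro m hm
  rw [map_sub, sub_eq_zero]
  have h1 : coeff (R := ℚ) m theta11core = ({z : ℤ | z^2 + z = (m:ℤ)}.ncard : ℚ) := by
    rw [theta11core, coeff_mk]
  have h2 : coeff (R := ℚ) m (2 * theta2 n)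
      = 2 * ((Finset.filter (fun i => i*i+i = m) (range n)).card : ℚ) := by
    rw [show (2 : PowerSeries ℚ) * theta2 n = C (R := ℚ) 2 * theta2 n from by
      simp [map_ofNat], coeff_C_mul]
    unfold theta2
    rw [map_sum]
    congr 1
    rw [Finset.card_filter, Nat.cast_sum]
    refine Finset.sum_congr rfl fun i _ => ?_
    rw [coeff_X_pow]
    by_cases hi : i*i+i = m
    · simp [hi]
    · simp [hi, Ne.symm hi]
  rw [h1, h2]
  by_cases hex : ∃ i₀ : ℕ, i₀*i₀ + i₀ = m
  · obtain ⟨i₀, hi₀⟩ := hex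
    have hi₀n : i₀ < n := by
      have : i₀ ≤ i₀*i₀ + i₀ := Nat.le_add_left i₀ (i₀*i₀)
      omega
    have hm0 : ((i₀:ℤ))^2 + i₀ = (m:ℤ) := by
      push_cast [← hi₀]
      ring
    have hset : {z : ℤ | z^2 + z = (m:ℤ)} = {(i₀:ℤ), -(i₀:ℤ)-1} := by
      ext z
      simp only [Set.mem_setOf_eq, Set.mem_insert_iff, Set.mem_singleton_iff]
      constructor
      · intro hz
        have hfac : (z - i₀) * (z + i₀ + 1) = 0 := by linear_combination hz - hm0
        rcases mul_eq_zero.mp hfac with h | h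
        · left; linarith
        · right; linarith
      · rintro (rfl | rfl)
        · exact hm0
        · linear_combination hm0
    have hfil : Finset.filter (fun i => i*i+i = m) (range n) = {i₀} := by
      ext j
      simp only [Finset.mem_filter, Finset.mem_range, Finset.mem_singleton]
      constructor
      · rintro ⟨_, hj⟩
        exact nat_sol_unique (hj.trans hi₀.symm)
      · rintro rfl
        exact ⟨hi₀n, hi₀⟩
    rw [hset, hfil, Set.ncard_pair (by omega : (i₀:ℤ) ≠ -(i₀:ℤ)-1), Finset.card_singleton]
    norm_num
  · push_neg at hex
    have hset : {z : ℤ | z^2 + z = (m:ℤ)} = ∅ := by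
      ext z
      simp only [Set.mem_setOf_eq, Set.mem_empty_iff_false, iff_false]
      intro hz
      rcases le_or_gt 0 z with hz0 | hz0
      · obtain ⟨a, rfl⟩ := Int.eq_ofNat_of_zero_le hz0
        apply hex a
        exact_mod_cast (by linear_combination hz : ((a:ℤ))*a + a = (m:ℤ))
      · set a := (-z-1).toNat with ha
        have haz : (a:ℤ) = -z-1 := Int.toNat_of_nonneg (by omega)
        apply hex a
        have : ((a:ℤ))*a + a = (m:ℤ) := by
          rw [haz]
          linear_combination hz
        exact_mod_cast this
    have hfil : Finset.filter (fun i => i*i+i = m) (range n) = ∅ := by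
      rw [Finset.filter_eq_empty_iff]
      intro j _
      exact hex j
    rw [hset, hfil]
    simp

theorem core : theta11core * Ek ℚ 2 = 2 * Ek ℚ 4 ^ 2 := by
  ext m
  set d := m + 1 with hd
  set n := 2*d + 1 with hn
  set N := 2*n with hN
  have c_theta : X^d ∣ theta11core - 2 * theta2 n := theta_cong d n (by omega)
  have c_e2 : X^d ∣ Ek ℚ 2 - pm N := by
    rw [pm_eq]
    exact Ek_cong 2 d N (by omega) (by omega)
  have c_e4 : X^d ∣ Ek ℚ 4 - pmc 4 N := Ek_cong 4 d N (by omega) (by omega)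
  have step1 : X^d ∣ theta11core * Ek ℚ 2 - (2 * theta2 n) * pm N := cong_mul c_theta c_e2
  have step2 : X^d ∣ (2 * theta2 n) * pm N - 2 * (pmc 4 N)^2 := key_cong d n N hn hN
  have step3 : X^d ∣ 2 * (pmc 4 N)^2 - 2 * Ek ℚ 4 ^ 2 := by
    rw [pow_two, pow_two]
    exact cong_mul (by simp) (cong_mul (cong_symm c_e4) (cong_symm c_e4))
  exact coeff_eq (cong_trans (cong_trans step1 step2) step3) (by omega)

end Theta11Aux8


/-- ∑_{n ∈ ℤ} q^{n²+n} = 2 (q⁴;q⁴)_∞² / (q²;q²)_∞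
(equivalently θ_{1,1}(q) = q^{1/4} ∑_{n∈ℤ} q^{n²+n} = 2 q^{1/4} (q⁴;q⁴)_∞²/(q²;q²)_∞). -/
theorem theta11_eq_eta_quotient :
    toL theta11core = 2 * EL 4 ^ 2 / EL 2 := by
  have hek : constantCoeff (R := ℚ) (Ek ℚ 2) = 1 := by
    have h0 : constantCoeff (R := ℚ) (Ek ℚ 2) = coeff (R := ℚ) 0 (Ek ℚ 2) := by
      rw [coeff_zero_eq_constantCoeff]
    rw [h0]
    show coeff (R := ℚ) 0 (qPoch (X^2) (X^2)) = 1
    rw [qPoch, coeff_mk]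
    simp
  have h2 : EL 2 ≠ 0 := by
    intro h
    have hz : Ek ℚ 2 = 0 := by
      apply HahnSeries.ofPowerSeries_injective (Γ := ℤ)
      rw [map_zero]
      unfold EL at h
      exact h
    rw [hz] at hek
    simp at hek
  rw [eq_div_iff h2]
  have hcast : ((theta11core * Ek ℚ 2 : PowerSeries ℚ) : LaurentSeries ℚ)
      = ((2 * Ek ℚ 4 ^ 2 : PowerSeries ℚ) : LaurentSeries ℚ) := by
    rw [Theta11Aux8.core]
  rw [PowerSeries.coe_mul, PowerSeries.coe_mul, PowerSeries.coe_pow] at hcast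
  show toL theta11core * EL 2 = 2 * EL 4 ^ 2
  unfold toL EL
  rw [hcast]
  congr 1
  exact map_ofNat _ 2
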